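/- arXiv:1805.07210 — 6 statements merged into one kernel-verified Lean document; each statement's English description precedes it below -/
import Mathlib

section
/- Let A = (A_1, ..., A_d) be a set system on S of rank d (i.e., A has a partial transversal of size d), and let M* be the dual of the transversal matroid M(A). For q ∈ ℕ^d, the following are equivalent: (i) there exists a q-transversal of A that is an independent set of M*; (ii) for every J ⊆ [d], ∑_{j∈J} q_j ≤ rk*(⋃_{j∈J} A_j). -/
open Finset MvPolynomial
attribute [local instance] Classical.propDecidable

variable {S : Type*} [Fintype S] [DecidableEq S]

/-- `T` is a partial transversal of the set system `A = (A j : j ∈ [d])`: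
its elements can be matched injectively to distinct members of `A` containing them. -/
def IsPT {d : ℕ} (A : Fin d → Finset S) (T : Finset S) : Prop :=
  ∃ f : S → Fin d, Set.InjOn f ↑T ∧ ∀ s ∈ T, s ∈ A (f s)

/-- Rank function of the transversal matroid `M(A)`:
the maximum size of a partial transversal contained in `T`. -/
noncomputable def tRk {d : ℕ} (A : Fin d → Finset S) (T : Finset S) : ℕ :=
  (T.powerset.filter (IsPT A)).sup Finset.card

/-- Rank function of the dual matroid `M(A)*`: `rk*(T) = rk(S∖T) + |T| − rk(S)`. -/
noncomputable def dualRk {d : ℕ} (A : Fin d → Finset S) (T : Finset S) : ℕ :=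
  tRk A Tᶜ + T.card - tRk A (univ : Finset S)

/-- Lattice points of the parking polymatroid `P(A)`. -/
def inP {d : ℕ} (A : Fin d → Finset S) (q : Fin d →₀ ℕ) : Prop :=
  ∀ J : Finset (Fin d), ∑ j ∈ J, q j ≤ dualRk A (J.biUnion A)

/-- Rank function of the matroid of a vector configuration:
the columns `v_s` of the matrix `V`. -/
noncomputable def vRk {k : Type*} [Field k] {d : ℕ} (V : Matrix (Fin d) S k) (T : Finset S) : ℕ :=
  Module.finrank k (Submodule.span k ((fun s j => V j s) '' (T : Set S)))

/-- The power ideal `I(V)`, generated by `ℓ_H ^ ρ_H` over all hyperplanes `H` of `V`: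
a hyperplane is cut out by a nonzero linear form `ℓ` such that the vectors it kills span a
rank-`(d−1)` subspace, and `ρ_H` is the number of vectors of `V` outside `H`. -/
noncomputable def powerIdeal {k : Type*} [Field k] {d : ℕ} (V : Matrix (Fin d) S k) :
    Ideal (MvPolynomial (Fin d) k) :=
  Ideal.span { p | ∃ ℓ : Fin d → k, ℓ ≠ 0 ∧
    vRk V ((univ : Finset S).filter fun s => ∑ j, ℓ j * V j s = 0) = d - 1 ∧
    p = (∑ j, C (ℓ j) * X j) ^ (((univ : Finset S).filter fun s => ¬ (∑ j, ℓ j * V j s = 0)).card) }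

/-- `T` is a `q`-transversal of `A`: a disjoint union of sets `T j ⊆ A j` with `|T j| = q j`. -/
def IsQTransversal {d : ℕ} (A : Fin d → Finset S) (q : Fin d → ℕ) (T : Finset S) : Prop :=
  ∃ Tj : Fin d → Finset S, (∀ j, Tj j ⊆ A j) ∧ (∀ j, (Tj j).card = q j) ∧
    (∀ i j, i ≠ j → Disjoint (Tj i) (Tj j)) ∧ T = (univ : Finset (Fin d)).biUnion Tj


/-!
`T` is independent in `M(A)*` iff its complement still contains a transversal of all of `A`.
So a `q`-transversal independent in `M*` is the same thing as a system of
distinct representatives of the family in which each `A j` is repeated `q j + 1` times, and by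
Hall's theorem such a system exists iff `∑_{j∈J} (q j + 1) ≤ |⋃_{j∈J} A j|` for all `J`.
This Hall condition follows from `(ii)` via the easy half `rk(T) ≤ |T ∩ A(J)| + d − |J|` of the
König–Ore formula, applied to `T = A(J)ᶜ`, and the rank-`d` assumption, applied to `T = S`.
The direction `(i) ⇒ (ii)` is `|Y| ≤ rk*(X)` for the part `Y = ⋃_{j∈J} T j` of the
`M*`-independent set `T` lying in `X = ⋃_{j∈J} A j`.
-/

open Function

section PartialTransversal

variable {α : Type*} {d : ℕ} {A : Fin d → Finset α}

theorem IsPT.mono {P Q : Finset α} (hQ : IsPT A Q) (hPQ : P ⊆ Q) : IsPT A P :=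
  let ⟨f, hf, hfA⟩ := hQ
  ⟨f, hf.mono (coe_subset.2 hPQ), fun s hs => hfA s (hPQ hs)⟩

theorem IsPT.card_le_tRk {P T : Finset α} (hP : IsPT A P) (hPT : P ⊆ T) : P.card ≤ tRk A T :=
  le_sup (f := card) (mem_filter.2 ⟨mem_powerset.2 hPT, hP⟩)

theorem tRk_mono {T U : Finset α} (hTU : T ⊆ U) : tRk A T ≤ tRk A U :=
  sup_mono (filter_subset_filter _ (powerset_mono.2 hTU))

theorem tRk_le_tRk_add_card_sdiff [DecidableEq α] (U V : Finset α) :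
    tRk A U ≤ tRk A V + (U \ V).card := by
  refine Finset.sup_le fun P hP => ?_
  obtain ⟨hPU, hP⟩ := mem_filter.1 hP
  have hPV : (P ∩ V).card ≤ tRk A V :=
    (hP.mono inter_subset_left).card_le_tRk inter_subset_right
  have hPUV : (P \ V).card ≤ (U \ V).card :=
    card_le_card (sdiff_subset_sdiff (mem_powerset.1 hPU) subset_rfl)
  have := card_inter_add_card_sdiff P V
  omega

theorem le_tRk_of_injective [DecidableEq α] {T : Finset α} (g : Fin d → α) (hg : Injective g)
    (hgA : ∀ j, g j ∈ A j) (hgT : ∀ j, g j ∈ T) : d ≤ tRk A T := by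
  rcases Nat.eq_zero_or_pos d with rfl | hd
  · exact Nat.zero_le _
  have : Nonempty (Fin d) := ⟨⟨0, hd⟩⟩
  have hP : IsPT A (univ.image g) := by
    refine ⟨invFun g, ?_, ?_⟩
    · simp only [coe_image, coe_univ, Set.image_univ]
      rintro _ ⟨i, rfl⟩ _ ⟨j, rfl⟩ hij
      rw [leftInverse_invFun hg i, leftInverse_invFun hg j] at hij
      rw [hij]
    · simp only [mem_image, mem_univ, true_and]
      rintro _ ⟨j, rfl⟩
      rw [leftInverse_invFun hg j]
      exact hgA j
  simpa [card_image_of_injective _ hg] using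
    hP.card_le_tRk (image_subset_iff.2 fun j _ => hgT j)

theorem tRk_le_card_inter_add [DecidableEq α] (T : Finset α) (J : Finset (Fin d)) :
    tRk A T ≤ (T ∩ J.biUnion A).card + (d - J.card) := by
  refine Finset.sup_le fun P hP => ?_
  obtain ⟨hPT, f, hf, hfA⟩ := mem_filter.1 hP
  have hin : (P.filter fun s => f s ∈ J).card ≤ (T ∩ J.biUnion A).card :=
    card_le_card fun s hs => by
      obtain ⟨hsP, hsJ⟩ := mem_filter.1 hs
      exact mem_inter.2 ⟨mem_powerset.1 hPT hsP, mem_biUnion.2 ⟨f s, hsJ, hfA s hsP⟩⟩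
  have hout : (P.filter fun s => f s ∉ J).card ≤ (univ \ J).card :=
    card_le_card_of_injOn f (fun s hs => by simpa using (mem_filter.1 hs).2)
      (hf.mono fun s hs => (mem_filter.1 hs).1)
  have hsplit := card_filter_add_card_filter_not (s := P) (p := fun s => f s ∈ J)
  rw [card_univ_sdiff, Fintype.card_fin] at hout
  omega

end PartialTransversal

section DualRank

variable {α : Type*} [Fintype α] [DecidableEq α] {d : ℕ} {A : Fin d → Finset α}

theorem dualRk_eq_card_iff (hrank : tRk A univ = d) {T : Finset α} :
    dualRk A T = T.card ↔ tRk A Tᶜ = d := by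
  have hle : tRk A Tᶜ ≤ d := (tRk_mono (subset_univ _)).trans hrank.le
  have hge : d ≤ tRk A Tᶜ + T.card := by
    simpa [hrank] using tRk_le_tRk_add_card_sdiff (A := A) univ Tᶜ
  rw [dualRk, hrank]
  omega

theorem card_le_dualRk_of_subset (hrank : tRk A univ = d) {T X Y : Finset α}
    (hT : dualRk A T = T.card) (hYT : Y ⊆ T) (hYX : Y ⊆ X) : Y.card ≤ dualRk A X := by
  have hTc := (dualRk_eq_card_iff hrank).1 hT
  have hXc : tRk A Tᶜ ≤ tRk A Xᶜ + (X \ T).card := by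
    simpa only [compl_sdiff_compl] using tRk_le_tRk_add_card_sdiff (A := A) Tᶜ Xᶜ
  have hY : Y.card ≤ (X ∩ T).card := card_le_card (subset_inter hYX hYT)
  have := card_inter_add_card_sdiff X T
  rw [dualRk, hrank]
  omega

theorem sum_add_one_le_card_biUnion (hrank : tRk A univ = d) {q : Fin d → ℕ}
    (hq : ∀ J : Finset (Fin d), ∑ j ∈ J, q j ≤ dualRk A (J.biUnion A)) (J : Finset (Fin d)) :
    ∑ j ∈ J, (q j + 1) ≤ (J.biUnion A).card := by
  have hcompl := tRk_le_card_inter_add (A := A) (J.biUnion A)ᶜ J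
  rw [inter_comm, inter_compl, card_empty, zero_add] at hcompl
  have huniv : d ≤ (J.biUnion A).card + (d - J.card) := by
    simpa [hrank] using tRk_le_card_inter_add (A := A) univ J
  have hJ : J.card ≤ d := by simpa using card_le_univ J
  have := hq J
  rw [dualRk, hrank] at this
  rw [sum_add_distrib, sum_const, smul_eq_mul, mul_one]
  omega

end DualRank

theorem exists_injective_sigma_of_sum_le {ι α : Type*} [DecidableEq ι] [DecidableEq α]
    (t : ι → Finset α) (m : ι → ℕ) (h : ∀ J : Finset ι, ∑ i ∈ J, m i ≤ (J.biUnion t).card) :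
    ∃ e : (Σ i, Fin (m i)) → α, Injective e ∧ ∀ p, e p ∈ t p.1 := by
  refine (all_card_le_biUnion_card_iff_exists_injective _).1 fun I => ?_
  have hI : I ⊆ (I.image Sigma.fst).sigma fun _ => univ := fun p hp =>
    mem_sigma.2 ⟨mem_image_of_mem _ hp, mem_univ _⟩
  calc I.card ≤ ∑ i ∈ I.image Sigma.fst, m i := by
        simpa [card_sigma] using card_le_card hI
    _ ≤ ((I.image Sigma.fst).biUnion t).card := h _
    _ = (I.biUnion fun p => t p.1).card := by rw [image_biUnion]

theorem exists_isQTransversal_of_injective {α : Type*} [Fintype α] [DecidableEq α] {d : ℕ}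
    {A : Fin d → Finset α} {q : Fin d → ℕ} (e : (Σ j, Fin (q j + 1)) → α) (he : Injective e)
    (heA : ∀ p, e p ∈ A p.1) : ∃ T, IsQTransversal A q T ∧ d ≤ tRk A Tᶜ := by
  set Tj : Fin d → Finset α := fun j => univ.image fun k : Fin (q j) => e ⟨j, k.castSucc⟩
  have hTj : ∀ {j s}, s ∈ Tj j ↔ ∃ k : Fin (q j), e ⟨j, k.castSucc⟩ = s := by simp [Tj]
  refine ⟨univ.biUnion Tj, ⟨Tj, fun j => ?_, fun j => ?_, fun i j hij => ?_, rfl⟩, ?_⟩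
  · exact image_subset_iff.2 fun k _ => heA _
  · exact (card_image_of_injective _ <|
      he.comp (sigma_mk_injective.comp (Fin.castSucc_injective _))).trans (by simp)
  · refine disjoint_left.2 fun s hsi hsj => hij ?_
    obtain ⟨k, rfl⟩ := hTj.1 hsi
    obtain ⟨l, hl⟩ := hTj.1 hsj
    exact congrArg Sigma.fst (he hl).symm
  · refine le_tRk_of_injective (fun j => e ⟨j, Fin.last _⟩)
      (fun i j hij => congrArg Sigma.fst (he hij)) (fun j => heA _) fun j => ?_
    simp only [mem_compl, mem_biUnion, mem_univ, true_and, not_exists]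
    intro i hi
    obtain ⟨k, hk⟩ := hTj.1 hi
    obtain ⟨rfl, hlast⟩ := Sigma.mk.inj_iff.1 (he hk)
    exact Fin.castSucc_ne_last k (eq_of_heq hlast)

/-- Rado's theorem for polymatroids: for a rank-`d` set system `A`, `A` has a `q`-transversal
independent in the dual matroid `M*` iff `∑_{j∈J} q_j ≤ rk*(⋃_{j∈J} A_j)` for all `J`. -/
theorem stmt2 {d : ℕ} (A : Fin d → Finset S) (hrank : tRk A (univ : Finset S) = d)
    (q : Fin d → ℕ) :
    (∃ T : Finset S, IsQTransversal A q T ∧ dualRk A T = T.card) ↔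
      ∀ J : Finset (Fin d), ∑ j ∈ J, q j ≤ dualRk A (J.biUnion A) := by
  constructor
  · rintro ⟨_, ⟨Tj, hTA, hTq, hTdisj, rfl⟩, hT⟩ J
    calc ∑ j ∈ J, q j = (J.biUnion Tj).card := by
          rw [card_biUnion fun i _ j _ hij => hTdisj i j hij]
          exact sum_congr rfl fun j _ => (hTq j).symm
      _ ≤ dualRk A (J.biUnion A) :=
          card_le_dualRk_of_subset hrank hT
            (biUnion_subset_biUnion_of_subset_left _ (subset_univ J))
            (biUnion_mono fun j _ => hTA j)
  · intro hq
    obtain ⟨e, he, heA⟩ :=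
      exists_injective_sigma_of_sum_le A (fun j => q j + 1) (sum_add_one_le_card_biUnion hrank hq)
    obtain ⟨T, hTq, hTc⟩ := exists_isQTransversal_of_injective e he heA
    have hTle : tRk A Tᶜ ≤ d := (tRk_mono (subset_univ _)).trans hrank.le
    exact ⟨T, hTq, (dualRk_eq_card_iff hrank).2 (le_antisymm hTle hTc)⟩
end

section
/- With A a rank-d set system on S and V = V(A) its generic representation, the power ideal I(V) is contained in the nonparking ideal J(A), i.e., every generator ℓ_H^{ρ_H} of I(V) lies in the ideal generated by the monomials x^q with q ∈ ℕ^d outside the parking polymatroid P(A). -/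
/-!
Fix a hyperplane `H = ker ℓ`, let `J` be the support of `ℓ` and `U = ⋃_{j ∈ J} A_j`. Every vector
outside `U` lies in `H`, so `ρ_H = |U ∖ H|`, and every monomial `x^q` of `ℓ_H ^ ρ_H` has
`∑_{j ∈ J} q_j = ρ_H`. Genericity forces `|U ∩ H| < |J|`: a matching of `|J|` vectors of `U ∩ H`
into `J` gives a square submatrix of `V` whose determinant is a nonzero polynomial in algebraically
independent entries, yet `ℓ|_J` lies in its kernel; if Hall's condition fails instead, one recurses
on a smaller support. Since a partial transversal of `S ∖ U` avoids `J`, `rk(S ∖ U) ≤ d - |J|`,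
and together these give `ρ_H > rk*(U)`, i.e. `q ∉ P(A)`.
-/

open Finset MvPolynomial
attribute [local instance] Classical.propDecidable

variable {S : Type*} [Fintype S] [DecidableEq S]

/-- The nonparking ideal `J(A)`: generated by the monomials `x^q` with `q ∉ P(A)`. -/
noncomputable def nonparkingIdeal (k : Type*) [Field k] {d : ℕ} (A : Fin d → Finset S) :
    Ideal (MvPolynomial (Fin d) k) :=
  Ideal.span { p | ∃ q : Fin d →₀ ℕ, ¬ inP A q ∧ p = monomial q (1 : k) }


theorem Matrix.det_ne_zero_of_algebraicIndependent {n K R : Type*} [Fintype n] [DecidableEq n]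
    [CommRing K] [Nontrivial K] [CommRing R] [Algebra K R] {P : n → n → Prop}
    (hdiag : ∀ i, P i i) {x : {p : n × n // P p.1 p.2} → R} (hx : AlgebraicIndependent K x) :
    (Matrix.of fun i j => if h : P i j then x ⟨(i, j), h⟩ else 0).det ≠ 0 := by
  set N : Matrix n n (MvPolynomial {p : n × n // P p.1 p.2} K) :=
    Matrix.of fun i j => if h : P i j then X ⟨(i, j), h⟩ else 0
  have hN : N.map (aeval x) = Matrix.of fun i j => if h : P i j then x ⟨(i, j), h⟩ else 0 := by
    ext i j
    by_cases h : P i j <;> simp [N, h]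
  have hN_one : N.map (eval fun p => if p.1.1 = p.1.2 then 1 else 0) = 1 := by
    ext i j
    by_cases hij : i = j
    · subst hij; simp [N, hdiag]
    · by_cases h : P i j <;> simp [N, h, hij, Matrix.one_apply_ne hij]
  have hdetN : N.det ≠ 0 := fun h0 => by
    have := RingHom.map_det (eval fun p => if p.1.1 = p.1.2 then (1 : K) else 0) N
    rw [h0, map_zero, RingHom.mapMatrix_apply, hN_one, det_one] at this
    exact zero_ne_one this
  rw [← hN, ← AlgHom.mapMatrix_apply, ← AlgHom.map_det]
  exact fun h0 => hdetN (hx (h0.trans (map_zero _).symm))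

section GenericRepresentation

variable {ι E K R : Type*} [CommRing K] [Nontrivial K] [CommRing R] [Algebra K R]
  {A : ι → Finset E} {V : Matrix ι E R}

theorem det_submatrix_ne_zero_of_matching (hzero : ∀ j s, s ∉ A j → V j s = 0)
    (hgen : AlgebraicIndependent K fun p : {p : ι × E // p.2 ∈ A p.1} => V p.1.1 p.1.2)
    {T : Finset E} {f : T → ι} (hf : Function.Injective f) (hfA : ∀ s, (s : E) ∈ A (f s)) :
    (V.submatrix f Subtype.val).det ≠ 0 := by
  have hx := hgen.comp (fun p : {p : T × T // (p.2 : E) ∈ A (f p.1)} => ⟨(f p.1.1, p.1.2), p.2⟩)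
    fun p p' h => by
      simp only [Subtype.mk.injEq, Prod.mk.injEq] at h
      exact Subtype.ext (Prod.ext (hf h.1) (Subtype.ext h.2))
  convert Matrix.det_ne_zero_of_algebraicIndependent (P := fun i j : T => (j : E) ∈ A (f i)) hfA hx
  ext i j
  by_cases h : (j : E) ∈ A (f i) <;> simp [h, hzero]

theorem exists_sum_mul_ne_zero_of_matching [IsDomain R] (hzero : ∀ j s, s ∉ A j → V j s = 0)
    (hgen : AlgebraicIndependent K fun p : {p : ι × E // p.2 ∈ A p.1} => V p.1.1 p.1.2)
    {T : Finset E} {C : Finset ι} {f : T → ι} (hf : Function.Injective f)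
    (himage : univ.image f = C) (hfA : ∀ s, (s : E) ∈ A (f s)) (hT : T.Nonempty)
    {ℓ : ι → R} (hℓ : ∀ j ∈ C, ℓ j ≠ 0) : ∃ s ∈ T, ∑ j ∈ C, ℓ j * V j s ≠ 0 := by
  by_contra! h
  refine det_submatrix_ne_zero_of_matching hzero hgen hf hfA
    (Matrix.exists_vecMul_eq_zero_iff.1 ⟨ℓ ∘ f, fun h0 => ?_, ?_⟩)
  · obtain ⟨s, hs⟩ := hT
    exact hℓ _ (himage ▸ mem_image_of_mem f (mem_univ (⟨s, hs⟩ : T))) (congrFun h0 ⟨s, hs⟩)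
  · ext s
    rw [Pi.zero_apply, ← h s s.2, ← himage, sum_image hf.injOn]
    simp [Matrix.vecMul, dotProduct]

theorem card_lt_card_of_forall_sum_mul_eq_zero [IsDomain R]
    (hzero : ∀ j s, s ∉ A j → V j s = 0)
    (hgen : AlgebraicIndependent K fun p : {p : ι × E // p.2 ∈ A p.1} => V p.1.1 p.1.2)
    {ℓ : ι → R} (C : Finset ι) (T : Finset E) (hC : C.Nonempty) (hℓ : ∀ j ∈ C, ℓ j ≠ 0)
    (hTA : ∀ s ∈ T, ∃ j ∈ C, s ∈ A j) (hsum : ∀ s ∈ T, ∑ j ∈ C, ℓ j * V j s = 0) :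
    #T < #C := by
  induction C using Finset.strongInduction generalizing T with
  | H C ih =>
  by_contra! hCT
  obtain ⟨T₀, hT₀T, hT₀⟩ := exists_subset_card_eq hCT
  set nbhd : T₀ → Finset ι := fun s => C.filter ((s : E) ∈ A ·)
  -- Hall's theorem for the neighbourhoods in `C` of a `#C`-subset `T₀ ⊆ T`: a matching contradicts
  -- genericity, and a violating set `X` has a neighbourhood `C' ⊊ C` to recurse on.
  by_cases hall : ∀ X : Finset T₀, #X ≤ #(X.biUnion nbhd)
  · obtain ⟨f, hf, hfC⟩ := (all_card_le_biUnion_card_iff_existsInjective' nbhd).1 hall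
    have himage : univ.image f = C := eq_of_subset_of_card_le
      (image_subset_iff.2 fun s _ => (mem_filter.1 (hfC s)).1)
      (by rw [card_image_of_injective _ hf, card_univ, Fintype.card_coe, hT₀])
    obtain ⟨s, hs, hne⟩ := exists_sum_mul_ne_zero_of_matching hzero hgen hf himage
      (fun s => (mem_filter.1 (hfC s)).2) (card_pos.1 (hT₀ ▸ hC.card_pos)) hℓ
    exact hne (hsum s (hT₀T hs))
  push Not at hall
  obtain ⟨X₀, hX₀⟩ := hall
  set X := X₀.image Subtype.val
  set C' := C.filter fun j => ∃ s ∈ X, s ∈ A j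
  have hXT : X ⊆ T := image_subset_iff.2 fun s _ => hT₀T s.2
  have hC'X : #C' < #X := by
    rw [card_image_of_injective _ Subtype.val_injective]
    refine lt_of_eq_of_lt (congrArg card (ext fun j => ?_)) hX₀
    simp only [C', X, nbhd, mem_filter, mem_biUnion, mem_image]
    aesop
  have hXC : #X ≤ #C := hT₀ ▸ card_le_card (image_subset_iff.2 fun s _ => s.2)
  obtain ⟨s₀, hs₀⟩ : X.Nonempty := card_pos.1 (by omega)
  obtain ⟨j₀, hj₀, hs₀j₀⟩ := hTA s₀ (hXT hs₀)
  have := ih C' (ssubset_of_subset_of_ne (filter_subset _ _) fun h => by rw [h] at hC'X; omega) X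
    ⟨j₀, mem_filter.2 ⟨hj₀, s₀, hs₀, hs₀j₀⟩⟩ (fun j hj => hℓ j (mem_filter.1 hj).1)
    (fun s hs => ?_) fun s hs => ?_
  · omega
  · obtain ⟨j, hj, hsj⟩ := hTA s (hXT hs)
    exact ⟨j, mem_filter.2 ⟨hj, s, hs, hsj⟩, hsj⟩
  · rw [sum_filter_of_ne fun j _ h =>
      ⟨s, hs, by_contra fun hsj => h (by rw [hzero j s hsj, mul_zero])⟩]
    exact hsum s (hXT hs)

end GenericRepresentation

theorem tRk_compl_biUnion_add_card_le {d : ℕ} (A : Fin d → Finset S) (J : Finset (Fin d)) :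
    tRk A (J.biUnion A)ᶜ + #J ≤ d := by
  have hle : tRk A (J.biUnion A)ᶜ ≤ #Jᶜ := Finset.sup_le fun T hT => by
    obtain ⟨hTU, f, hf, hfA⟩ := by simpa only [mem_filter, mem_powerset] using hT
    calc #T = #(T.image f) := (card_image_of_injOn hf).symm
      _ ≤ #Jᶜ := card_le_card <| image_subset_iff.2 fun s hs => mem_compl.2 fun hj =>
          mem_compl.1 (hTU hs) (mem_biUnion.2 ⟨f s, hj, hfA s hs⟩)
  have := card_compl_add_card J
  rw [Fintype.card_fin] at this
  omega

theorem card_le_card_biUnion_of_tRk_univ_eq {d : ℕ} {A : Fin d → Finset S}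
    (hrank : tRk A univ = d) (J : Finset (Fin d)) : #J ≤ #(J.biUnion A) := by
  rcases (univ.powerset.filter (IsPT A)).eq_empty_or_nonempty with h | h
  · obtain rfl : d = 0 := by rw [← hrank, tRk, h, sup_empty]; rfl
    simp [Finset.eq_empty_of_isEmpty J]
  obtain ⟨T, hT, hTd⟩ := exists_mem_eq_sup _ h card
  obtain ⟨-, f, hf, hfA⟩ := mem_filter.1 hT
  have hfT : T.image f = univ := eq_univ_of_card _ <| by
    rw [card_image_of_injOn hf, ← hTd, ← tRk, hrank, Fintype.card_fin]
  calc #J ≤ #((T.filter (f · ∈ J)).image f) := card_le_card fun j hj => by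
        obtain ⟨s, hs, rfl⟩ := mem_image.1 (hfT ▸ mem_univ j)
        exact mem_image_of_mem _ (mem_filter.2 ⟨hs, hj⟩)
    _ ≤ #(T.filter (f · ∈ J)) := card_image_le
    _ ≤ #(J.biUnion A) := card_le_card fun s hs =>
        mem_biUnion.2 ⟨f s, (mem_filter.1 hs).2, hfA s (mem_filter.1 hs).1⟩

theorem dualRk_biUnion_lt_card_filter_ne_zero {K R : Type*} [CommRing K] [Nontrivial K]
    [CommRing R] [IsDomain R] [Algebra K R] {d : ℕ} {A : Fin d → Finset S}
    {V : Matrix (Fin d) S R} (hrank : tRk A univ = d) (hzero : ∀ j s, s ∉ A j → V j s = 0)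
    (hgen : AlgebraicIndependent K fun p : {p : Fin d × S // p.2 ∈ A p.1} => V p.1.1 p.1.2)
    {ℓ : Fin d → R} (hℓ : ℓ ≠ 0) :
    dualRk A ((univ.filter fun j => ℓ j ≠ 0).biUnion A) <
      #((univ : Finset S).filter fun s => ¬ (∑ j, ℓ j * V j s = 0)) := by
  set J := univ.filter fun j => ℓ j ≠ 0
  have hJ : J.Nonempty :=
    let ⟨j, hj⟩ := Function.ne_iff.1 hℓ
    ⟨j, mem_filter.2 ⟨mem_univ j, hj⟩⟩
  have hsumJ (s : S) : ∑ j ∈ J, ℓ j * V j s = ∑ j, ℓ j * V j s :=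
    sum_filter_of_ne fun _ _ h => left_ne_zero_of_mul h
  have hZ : #((J.biUnion A).filter fun s => ∑ j, ℓ j * V j s = 0) < #J :=
    card_lt_card_of_forall_sum_mul_eq_zero hzero hgen J _ hJ (fun j hj => (mem_filter.1 hj).2)
      (fun s hs => mem_biUnion.1 (mem_filter.1 hs).1)
      fun s hs => (hsumJ s).trans (mem_filter.1 hs).2
  have hρ : ((univ : Finset S).filter fun s => ¬ (∑ j, ℓ j * V j s = 0)) =
      (J.biUnion A).filter fun s => ¬ (∑ j, ℓ j * V j s = 0) := by
    ext s
    simp only [mem_filter, mem_univ, true_and]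
    refine ⟨fun hs => ⟨by_contra fun hsU => hs ?_, hs⟩, And.right⟩
    rw [← hsumJ]
    exact sum_eq_zero fun j hj => by
      rw [hzero j s fun hsj => hsU (mem_biUnion.2 ⟨j, hj, hsj⟩), mul_zero]
  have hsplit := card_filter_add_card_filter_not (s := J.biUnion A) fun s => ∑ j, ℓ j * V j s = 0
  have hcompl := tRk_compl_biUnion_add_card_le A J
  have hJU := card_le_card_biUnion_of_tRk_univ_eq hrank J
  rw [dualRk, hrank, hρ]
  omega

theorem sum_filter_ne_zero_eq_of_mem_support_pow {σ R : Type*} [Fintype σ] [CommSemiring R]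
    (ℓ : σ → R) {n : ℕ} {q : σ →₀ ℕ} (hq : q ∈ ((∑ j, C (ℓ j) * X j) ^ n).support) :
    ∑ j ∈ univ.filter fun j => ℓ j ≠ 0, q j = n := by
  -- Weighting exactly the variables in the support of `ℓ`, the linear form is homogeneous.
  set w : σ → ℕ := fun j => if ℓ j ≠ 0 then 1 else 0
  have hlin : IsWeightedHomogeneous w (∑ j, C (ℓ j) * X j) 1 :=
    IsWeightedHomogeneous.sum _ _ _ fun j _ => by
      by_cases h : ℓ j = 0
      · simp [h, isWeightedHomogeneous_zero]
      · simpa [w, h] using (isWeightedHomogeneous_X R w j).C_mul (ℓ j)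
  have hdeg := (hlin.pow n) (mem_support_iff.1 hq)
  rw [smul_eq_mul, mul_one] at hdeg
  rw [← hdeg, Finsupp.weight_apply, Finsupp.sum_fintype _ _ (by simp), sum_filter]
  simp [w]

/-- The power ideal of a generic representation of a rank-`d` transversal matroid is contained
in the nonparking ideal. -/
theorem stmt6 {d : ℕ} (A : Fin d → Finset S) (hrank : tRk A (univ : Finset S) = d)
    (V : Matrix (Fin d) S ℝ) (hz : ∀ j s, V j s = 0 ↔ s ∉ A j)
    (halg : AlgebraicIndependent ℚ
      (fun p : {p : Fin d × S // p.2 ∈ A p.1} => V p.1.1 p.1.2)) :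
    powerIdeal V ≤ nonparkingIdeal ℝ A := by
  rw [powerIdeal, Ideal.span_le]
  rintro _ ⟨ℓ, hℓ, -, rfl⟩
  have hlt := dualRk_biUnion_lt_card_filter_ne_zero hrank (fun j s => (hz j s).2) halg hℓ
  have hJA : nonparkingIdeal ℝ A = Ideal.span ((fun q => monomial q 1) '' {q | ¬ inP A q}) := by
    simp only [nonparkingIdeal, Set.image, Set.mem_ofPred_eq, eq_comm]
  rw [SetLike.mem_coe, hJA, mem_ideal_span_monomial_image]
  refine fun q hq => ⟨q, fun hq_park => ?_, le_rfl⟩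
  have := hq_park (univ.filter fun j => ℓ j ≠ 0)
  rw [sum_filter_ne_zero_eq_of_mem_support_pow ℓ hq] at this
  omega
end

section
/- Let f : 2^[d] → ℕ be a monotone submodular function with f(∅) = 0, and let P_f = { q ∈ ℝ_{≥0}^d : ∑_{j∈J} q_j ≤ f(J) for all J ⊆ [d] } be the associated polymatroid. Then the set of monomials { x^q : q ∈ P_f ∩ ℕ^d } is a pure order ideal of monomials: it is closed under divisibility, and all its maximal elements under divisibility have the same total degree f([d]). -/
open Finset MvPolynomial
attribute [local instance] Classical.propDecidable

variable {S : Type*} [Fintype S] [DecidableEq S]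

/-!
Call `J` tight for a lattice point `q` of `P_f` if `∑_{j ∈ J} q_j = f(J)`. By submodularity the
tight sets are closed under union, and `∅` is tight. At a maximal `q` every coordinate lies in a
tight set, since otherwise it could be raised by one; so `[d]`, the union of these sets, is tight.
-/

namespace Polymatroid

variable {ι M : Type*} [DecidableEq ι] [AddCommMonoid M] [PartialOrder M]
  [IsOrderedCancelAddMonoid M] {f : Finset ι → M} {q : ι → M}

theorem sum_union_eq_of_sum_eq (hsub : ∀ I J : Finset ι, f (I ∩ J) + f (I ∪ J) ≤ f I + f J)
    (hq : ∀ J : Finset ι, ∑ j ∈ J, q j ≤ f J) {A B : Finset ι}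
    (hA : ∑ j ∈ A, q j = f A) (hB : ∑ j ∈ B, q j = f B) :
    ∑ j ∈ A ∪ B, q j = f (A ∪ B) := by
  refine le_antisymm (hq _) (le_of_add_le_add_left (a := f (A ∩ B)) ?_)
  calc f (A ∩ B) + f (A ∪ B) ≤ f A + f B := hsub A B
    _ = ∑ j ∈ A ∩ B, q j + ∑ j ∈ A ∪ B, q j := by rw [← hA, ← hB, ← sum_union_inter, add_comm]
    _ ≤ f (A ∩ B) + ∑ j ∈ A ∪ B, q j := add_le_add_left (hq _) _

theorem sum_sup_eq_of_sum_eq (h0 : f ∅ = 0)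
    (hsub : ∀ I J : Finset ι, f (I ∩ J) + f (I ∪ J) ≤ f I + f J)
    (hq : ∀ J : Finset ι, ∑ j ∈ J, q j ≤ f J) {κ : Type*} (s : Finset κ) {A : κ → Finset ι}
    (hA : ∀ k ∈ s, ∑ j ∈ A k, q j = f (A k)) :
    ∑ j ∈ s.sup A, q j = f (s.sup A) :=
  Finset.sup_induction (p := fun B => ∑ j ∈ B, q j = f B) (by simp [h0])
    (fun _ hB _ hC => sum_union_eq_of_sum_eq hsub hq hB hC) hA

theorem exists_mem_sum_eq_of_maximal {f : Finset ι → ℕ} {q : ι → ℕ}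
    (hq : ∀ J : Finset ι, ∑ j ∈ J, q j ≤ f J)
    (hmax : ∀ q' : ι → ℕ, (∀ J : Finset ι, ∑ j ∈ J, q' j ≤ f J) → (∀ j, q j ≤ q' j) → q' = q)
    (i : ι) : ∃ J : Finset ι, i ∈ J ∧ ∑ j ∈ J, q j = f J := by
  by_contra! hslack
  have hsum (J : Finset ι) :
      ∑ j ∈ J, (q + Pi.single i 1 : ι → ℕ) j = ∑ j ∈ J, q j + if i ∈ J then 1 else 0 := by
    simp only [Pi.add_apply, sum_add_distrib, sum_pi_single']
  have hmem (J : Finset ι) : ∑ j ∈ J, (q + Pi.single i 1 : ι → ℕ) j ≤ f J := by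
    rw [hsum]
    split_ifs with hi
    · exact (hq J).lt_of_ne (hslack J hi)
    · exact hq J
  simpa using congrFun (hmax _ hmem fun j => Nat.le_add_right _ _) i

end Polymatroid

open Polymatroid in
theorem stmt9_general {d : ℕ} (f : Finset (Fin d) → ℕ) (h0 : f ∅ = 0)
    (hsub : ∀ I J : Finset (Fin d), f (I ∩ J) + f (I ∪ J) ≤ f I + f J) :
    (∀ q q' : Fin d → ℕ, (∀ j, q' j ≤ q j) →
        (∀ J : Finset (Fin d), ∑ j ∈ J, q j ≤ f J) →
        (∀ J : Finset (Fin d), ∑ j ∈ J, q' j ≤ f J)) ∧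
      (∀ q : Fin d → ℕ, (∀ J : Finset (Fin d), ∑ j ∈ J, q j ≤ f J) →
        (∀ q' : Fin d → ℕ, (∀ J : Finset (Fin d), ∑ j ∈ J, q' j ≤ f J) →
          (∀ j, q j ≤ q' j) → q' = q) →
        ∑ j, q j = f (univ : Finset (Fin d))) := by
  refine ⟨fun q q' hle hq J => (sum_le_sum fun j _ => hle j).trans (hq J), fun q hq hmax => ?_⟩
  choose J hJ hJtight using exists_mem_sum_eq_of_maximal hq hmax
  have hcover : univ.sup J = univ :=
    eq_univ_of_forall fun j => mem_sup.mpr ⟨j, mem_univ j, hJ j⟩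
  rw [← hcover]
  exact sum_sup_eq_of_sum_eq h0 hsub hq univ fun j _ => hJtight j

/-- For a monotone submodular `f` with `f ∅ = 0`, the lattice points of the polymatroid `P_f`
form a pure order ideal of monomials: they are closed downwards under divisibility, and every
maximal one has total degree `f([d])`. -/
theorem stmt9 {d : ℕ} (f : Finset (Fin d) → ℕ) (h0 : f ∅ = 0)
    (hmono : ∀ I J : Finset (Fin d), I ⊆ J → f I ≤ f J)
    (hsub : ∀ I J : Finset (Fin d), f (I ∩ J) + f (I ∪ J) ≤ f I + f J) :
    (∀ q q' : Fin d → ℕ, (∀ j, q' j ≤ q j) →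
        (∀ J : Finset (Fin d), ∑ j ∈ J, q j ≤ f J) →
        (∀ J : Finset (Fin d), ∑ j ∈ J, q' j ≤ f J)) ∧
      (∀ q : Fin d → ℕ, (∀ J : Finset (Fin d), ∑ j ∈ J, q j ≤ f J) →
        (∀ q' : Fin d → ℕ, (∀ J : Finset (Fin d), ∑ j ∈ J, q' j ≤ f J) →
          (∀ j, q j ≤ q' j) → q' = q) →
        ∑ j, q j = f (univ : Finset (Fin d))) :=
  stmt9_general f h0 hsub
end

section
/- Let V = (v_s : s ∈ S) ⊂ k^d span k^d. For each hyperplane H of V with defining linear form ℓ_H and ρ_H = |V ∖ H|, the power ℓ_H^{ρ_H} lies in the kernel of the homomorphism φ_V : k[x_1,...,x_d] → B(V), x_j ↦ ∑_{s∈S} (v_s)_j y_s, where B(V) is k[y_s : s ∈ S] modulo all y_s^2 and all cocircuit monomials ∏_{s∈T} y_s. Hence I(V) ⊆ ker φ_V. -/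
/-! In `B(V)` every `y_s` squares to zero, so a linear form `∑_{s ∈ T} c_s y_s` raised to the power
`|T|` equals `|T|! ∏_{s ∈ T} c_s · ∏_{s ∈ T} y_s`. The form `φ_V(ℓ_H) = ∑_s ℓ_H(v_s) y_s` is supported
exactly on `S ∖ H`, which is a cocircuit: any `v_s ∉ H` lies outside the span of `H`, so adding it
raises the rank from `d - 1` to `d`. Hence `φ_V(ℓ_H^{ρ_H})` is a multiple of a cocircuit monomial. -/

open Finset MvPolynomial
attribute [local instance] Classical.propDecidable
open scoped Nat

variable {S : Type*} [Fintype S] [DecidableEq S]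

/-- `T` is a cocircuit of the matroid of `V`: the complement of a hyperplane flat. -/
noncomputable def IsCocircuitV {k : Type*} [Field k] {d : ℕ} (V : Matrix (Fin d) S k)
    (T : Finset S) : Prop :=
  vRk V Tᶜ = vRk V (univ : Finset S) - 1 ∧
    ∀ s ∈ T, vRk V (insert s Tᶜ) = vRk V (univ : Finset S)

/-- The ideal of relations defining the squarefree algebra `B(V)`. -/
noncomputable def relIdealV {k : Type*} [Field k] {d : ℕ} (V : Matrix (Fin d) S k) :
    Ideal (MvPolynomial S k) :=
  Ideal.span ({ p | ∃ s : S, p = X s ^ 2 } ∪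
    { p | ∃ T : Finset S, IsCocircuitV V T ∧ p = ∏ s ∈ T, X s })

theorem add_pow_succ_of_sq_eq_zero {R : Type*} [CommSemiring R] {a : R} (ha : a ^ 2 = 0)
    (b : R) (n : ℕ) : (a + b) ^ (n + 1) = b ^ (n + 1) + (n + 1) * a * b ^ n := by
  induction n with
  | zero => simp [add_comm]
  | succ n ih =>
    calc (a + b) ^ (n + 2) = (a + b) * (b ^ (n + 1) + (n + 1) * a * b ^ n) := by
          rw [pow_succ', ih]
      _ = b ^ (n + 2) + (n + 2) * a * b ^ (n + 1) + (n + 1) * a ^ 2 * b ^ n := by ring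
      _ = _ := by rw [ha]; push_cast; ring

theorem sum_mul_prod_eq_zero_of_sq_eq_zero {R ι : Type*} [CommSemiring R] [DecidableEq ι]
    {T : Finset ι} {y : ι → R} (hy : ∀ s ∈ T, y s ^ 2 = 0) :
    (∑ s ∈ T, y s) * ∏ s ∈ T, y s = 0 := by
  rw [sum_mul]
  refine sum_eq_zero fun s hs => ?_
  rw [← mul_prod_erase T y hs, ← mul_assoc, ← sq, hy s hs, zero_mul]

theorem sum_pow_card_eq_factorial_mul_prod {R ι : Type*} [CommSemiring R] [DecidableEq ι]
    (T : Finset ι) {y : ι → R} (hy : ∀ s ∈ T, y s ^ 2 = 0) :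
    (∑ s ∈ T, y s) ^ #T = (#T)! * ∏ s ∈ T, y s := by
  induction T using Finset.induction_on with
  | empty => simp
  | @insert t T ht ih =>
    have hyT : ∀ s ∈ T, y s ^ 2 = 0 := fun s hs => hy s (mem_insert_of_mem hs)
    rw [sum_insert ht, card_insert_of_notMem ht, prod_insert ht,
      add_pow_succ_of_sq_eq_zero (hy t (mem_insert_self t T)), pow_succ', ih hyT,
      mul_left_comm, sum_mul_prod_eq_zero_of_sq_eq_zero hyT, Nat.factorial_succ]
    push_cast
    ring

theorem sum_mul_pow_card_eq_zero {R ι : Type*} [CommSemiring R] [DecidableEq ι] (T : Finset ι)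
    (c : ι → R) {y : ι → R} (hy : ∀ s ∈ T, y s ^ 2 = 0) (hprod : ∏ s ∈ T, y s = 0) :
    (∑ s ∈ T, c s * y s) ^ #T = 0 := by
  rw [sum_pow_card_eq_factorial_mul_prod T fun s hs => by rw [mul_pow, hy s hs, mul_zero],
    prod_mul_distrib, hprod, mul_zero, mul_zero]

section VectorConfiguration

variable {k : Type*} [Field k] {d : ℕ}

theorem vRk_le (V : Matrix (Fin d) S k) (T : Finset S) : vRk V T ≤ d :=
  (Submodule.finrank_le _).trans_eq (Module.finrank_fin_fun k)

theorem vRk_lt_vRk_insert {V : Matrix (Fin d) S k} {T : Finset S} {s : S}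
    (hs : (fun j => V j s) ∉ Submodule.span k ((fun t j => V j t) '' (T : Set S))) :
    vRk V T < vRk V (insert s T) := by
  refine Submodule.finrank_lt_finrank_of_lt (SetLike.lt_iff_le_and_exists.mpr ⟨?_, ?_⟩)
  · exact Submodule.span_mono (by simp [Set.image_insert_eq])
  · exact ⟨_, Submodule.subset_span ⟨s, by simp, rfl⟩, hs⟩

theorem column_notMem_span_filter_eq_zero (V : Matrix (Fin d) S k) (ℓ : Fin d → k) {s : S}
    (hs : ∑ j, ℓ j * V j s ≠ 0) :
    (fun j => V j s) ∉ Submodule.span k ((fun t j => V j t) ''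
      ↑((univ : Finset S).filter fun t => ∑ j, ℓ j * V j t = 0)) := by
  have hker : Submodule.span k ((fun t j => V j t) ''
      ↑((univ : Finset S).filter fun t => ∑ j, ℓ j * V j t = 0)) ≤
        LinearMap.ker (dotProductEquiv k (Fin d) ℓ) := by
    rw [Submodule.span_le]
    rintro _ ⟨t, ht, rfl⟩
    simpa [dotProduct] using ht
  exact fun hmem => hs (by simpa [dotProduct] using hker hmem)

theorem isCocircuitV_filter_ne_zero {V : Matrix (Fin d) S k}
    (hspan : vRk V (univ : Finset S) = d) {ℓ : Fin d → k}
    (hH : vRk V ((univ : Finset S).filter fun s => ∑ j, ℓ j * V j s = 0) = d - 1) :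
    IsCocircuitV V ((univ : Finset S).filter fun s => ¬ (∑ j, ℓ j * V j s = 0)) := by
  have hcompl : ((univ : Finset S).filter fun s => ¬ (∑ j, ℓ j * V j s = 0))ᶜ =
      (univ : Finset S).filter fun s => ∑ j, ℓ j * V j s = 0 := by
    ext; simp
  refine ⟨by rw [hcompl, hH, hspan], fun s hs => ?_⟩
  rw [hcompl, hspan]
  have hlt := vRk_lt_vRk_insert (column_notMem_span_filter_eq_zero V ℓ (mem_filter.mp hs).2)
  have hle := vRk_le V (insert s ((univ : Finset S).filter fun t => ∑ j, ℓ j * V j t = 0))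
  omega

theorem aeval_sum_C_mul_X {A : Type*} [CommSemiring A] [Algebra k A] (V : Matrix (Fin d) S k)
    (y : S → A) (ℓ : Fin d → k) :
    aeval (fun j => ∑ s, algebraMap k A (V j s) * y s) (∑ j, C (ℓ j) * X j) =
      ∑ s, algebraMap k A (∑ j, ℓ j * V j s) * y s := by
  simp only [map_sum, map_mul, aeval_C, aeval_X, mul_sum, sum_mul]
  rw [sum_comm]
  simp only [mul_assoc]

theorem aeval_sum_C_mul_X_pow_card_eq_zero {V : Matrix (Fin d) S k}
    (hspan : vRk V (univ : Finset S) = d) {ℓ : Fin d → k}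
    (hH : vRk V ((univ : Finset S).filter fun s => ∑ j, ℓ j * V j s = 0) = d - 1) :
    aeval (fun j => Ideal.Quotient.mk (relIdealV V) (∑ s, C (V j s) * X s))
      ((∑ j, C (ℓ j) * X j) ^
        #((univ : Finset S).filter fun s => ¬ (∑ j, ℓ j * V j s = 0))) = 0 := by
  set y : S → MvPolynomial S k ⧸ relIdealV V := fun s => Ideal.Quotient.mk _ (X s)
  have hy : ∀ s, y s ^ 2 = 0 := fun s =>
    Ideal.Quotient.eq_zero_iff_mem.mpr (Ideal.subset_span (Or.inl ⟨s, rfl⟩))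
  have hprod : ∏ s ∈ (univ : Finset S).filter (fun s => ¬ (∑ j, ℓ j * V j s = 0)), y s = 0 := by
    rw [← map_prod, Ideal.Quotient.eq_zero_iff_mem]
    exact Ideal.subset_span (Or.inr ⟨_, isCocircuitV_filter_ne_zero hspan hH, rfl⟩)
  have hφ : (fun j => Ideal.Quotient.mk (relIdealV V) (∑ s, C (V j s) * X s)) =
      fun j => ∑ s, algebraMap k _ (V j s) * y s := by
    funext j
    simp only [y, map_sum, map_mul, ← algebraMap_eq, Ideal.Quotient.mk_algebraMap]
  have hsupport : ∀ s ∈ (univ : Finset S), algebraMap k _ (∑ j, ℓ j * V j s) * y s ≠ 0 →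
      ¬ (∑ j, ℓ j * V j s = 0) := fun s _ hne hzero => hne (by rw [hzero, map_zero, zero_mul])
  rw [map_pow, hφ, aeval_sum_C_mul_X, ← sum_filter_of_ne hsupport]
  exact sum_mul_pow_card_eq_zero _ _ (fun s _ => hy s) hprod

end VectorConfiguration

/-- Each generator `ℓ_H^{ρ_H}` of the power ideal lies in the kernel of
`φ_V : x_j ↦ ∑_s (v_s)_j y_s` into `B(V)`; hence `I(V) ⊆ ker φ_V`. -/
theorem stmt12 {k : Type*} [Field k] {d : ℕ} (V : Matrix (Fin d) S k)
    (hspan : vRk V (univ : Finset S) = d) :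
    (∀ ℓ : Fin d → k, ℓ ≠ 0 →
      vRk V ((univ : Finset S).filter fun s => ∑ j, ℓ j * V j s = 0) = d - 1 →
      aeval (fun j => Ideal.Quotient.mk (relIdealV V) (∑ s, C (V j s) * X s))
        ((∑ j, C (ℓ j) * X j) ^
          (((univ : Finset S).filter fun s => ¬ (∑ j, ℓ j * V j s = 0)).card)) = 0) ∧
      powerIdeal V ≤ RingHom.ker
        (aeval (fun j => Ideal.Quotient.mk (relIdealV V) (∑ s, C (V j s) * X s))
          : MvPolynomial (Fin d) k →ₐ[k] _).toRingHom := by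
  refine ⟨fun ℓ _ hH => aeval_sum_C_mul_X_pow_card_eq_zero hspan hH, ?_⟩
  rw [powerIdeal, Ideal.span_le]
  rintro _ ⟨ℓ, -, hH, rfl⟩
  exact aeval_sum_C_mul_X_pow_card_eq_zero hspan hH
end

section
/- Let V ⊂ k^d be a spanning vector configuration with matroid M = M(V) on S, |S| = n. Then the cocircuit algebra C(V) is spanned as a k-vector space by the products ∏_{s∈T} v_s(x), where T ranges over subsets T ⊆ S with rk_M(S∖T) = d (i.e., T independent in the dual matroid M*). -/
open Finset MvPolynomial
attribute [local instance] Classical.propDecidable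

variable {S : Type*} [Fintype S] [DecidableEq S]

/-- The cocircuit ideal `C-ideal(V)` of `k[x_1,…,x_d]`. -/
noncomputable def cocircuitIdeal {k : Type*} [Field k] {d : ℕ} (V : Matrix (Fin d) S k) :
    Ideal (MvPolynomial (Fin d) k) :=
  Ideal.span { p | ∃ T : Finset S, IsCocircuitV V T ∧ p = ∏ s ∈ T, ∑ j, C (V j s) * X j }


section myAux

set_option linter.unusedSectionVars false

variable {k : Type*} [Field k] {d : ℕ} (V : Matrix (Fin d) S k)

lemma myVRk_le_d (T : Finset S) : vRk V T ≤ d := by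
  have := Submodule.finrank_le (Submodule.span k ((fun s j => V j s) '' (T : Set S)))
  simpa [vRk, Module.finrank_pi] using this

lemma myVRk_insert_le (s : S) (T : Finset S) : vRk V (insert s T) ≤ vRk V T + 1 := by
  unfold vRk
  rw [Finset.coe_insert, Set.image_insert_eq, Submodule.span_insert]
  have h := Submodule.finrank_sup_add_finrank_inf_eq
    (Submodule.span k {(fun j => V j s)}) (Submodule.span k ((fun s j => V j s) '' (T : Set S)))
  have h1 : Module.finrank k (Submodule.span k {(fun j => V j s)}) ≤ 1 := by
    by_cases hz : (fun j => V j s) = (0 : Fin d → k)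
    · rw [hz, Submodule.span_zero_singleton]
      simp [finrank_bot]
    · rw [finrank_span_singleton hz]
  omega

lemma myExists_cocircuit_ext (hspan : vRk V (univ : Finset S) = d)
    {T : Finset S} (h : vRk V T < d) :
    ∃ C : Finset S, T ⊆ C ∧ vRk V C = d - 1 ∧ ∀ s ∉ C, vRk V (insert s C) = d := by
  classical
  set F := (univ : Finset (Finset S)).filter (fun C => T ⊆ C ∧ vRk V C ≤ d - 1) with hF
  have hTF : T ∈ F := by
    simp only [hF, Finset.mem_filter, Finset.mem_univ, true_and]
    exact ⟨Finset.Subset.refl _, by omega⟩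
  obtain ⟨C, hC, hmax⟩ := Finset.exists_max_image F Finset.card ⟨T, hTF⟩
  simp only [hF, Finset.mem_filter, Finset.mem_univ, true_and] at hC
  obtain ⟨hTC, hCrk⟩ := hC
  have hCne : C ≠ univ := by
    intro he; rw [he, hspan] at hCrk; omega
  have hins : ∀ s ∉ C, vRk V (insert s C) = d := by
    intro s hs
    have hle : vRk V (insert s C) ≤ d := myVRk_le_d V _
    by_contra hne
    have hmem : insert s C ∈ F := by
      simp only [hF, Finset.mem_filter, Finset.mem_univ, true_and]
      exact ⟨hTC.trans (Finset.subset_insert s C), by omega⟩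
    have := hmax _ hmem
    have hcard : C.card < (insert s C).card := Finset.card_lt_card (Finset.ssubset_insert hs)
    omega
  obtain ⟨s, hs⟩ : ∃ s, s ∉ C := by
    by_contra hno
    push_neg at hno
    exact hCne (Finset.eq_univ_of_forall hno)
  have h1 := hins s hs
  have h2 := myVRk_insert_le V s C
  exact ⟨C, hTC, by omega, hins⟩

lemma myProd_mem_cocircuitIdeal (hspan : vRk V (univ : Finset S) = d)
    {T : Finset S} (h : vRk V Tᶜ < d) :
    (∏ s ∈ T, ∑ j, C (V j s) * X j) ∈ cocircuitIdeal V := by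
  obtain ⟨Cs, hTC, hrk, hins⟩ := myExists_cocircuit_ext V hspan h
  have hcc : IsCocircuitV V Csᶜ := by
    constructor
    · rw [compl_compl, hrk, hspan]
    · intro s hs
      rw [compl_compl, hspan]
      exact hins s (by simpa using hs)
  have hsub : Csᶜ ⊆ T := by
    intro x hx
    rw [Finset.mem_compl] at hx
    by_contra hxT
    exact hx (hTC (Finset.mem_compl.mpr hxT))
  rw [← Finset.prod_sdiff hsub]
  exact Ideal.mul_mem_left _ _ (Ideal.subset_span ⟨Csᶜ, hcc, rfl⟩)

/-- the linear form associated to a vector, as a linear map -/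
noncomputable def myLfL (k : Type*) [Field k] (d : ℕ) :
    (Fin d → k) →ₗ[k] MvPolynomial (Fin d) k where
  toFun v := ∑ j, C (v j) * X j
  map_add' u v := by simp [add_mul, Finset.sum_add_distrib]
  map_smul' c v := by
    simp [smul_eq_C_mul, Finset.mul_sum, mul_assoc]

lemma myLfL_single (j : Fin d) : myLfL k d (Pi.single j 1) = X j := by
  simp only [myLfL, LinearMap.coe_mk, AddHom.coe_mk]
  rw [Finset.sum_eq_single j]
  · simp
  · intro i _ hne
    simp [Pi.single_apply, hne]
  · simp

lemma myStep (hspan : vRk V (univ : Finset S) = d) {T : Finset S} (hT : vRk V Tᶜ = d)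
    (j : Fin d) :
    Ideal.Quotient.mk (cocircuitIdeal V) ((X j) * ∏ s ∈ T, ∑ i, C (V i s) * X i) ∈
      Submodule.span k
        { x : MvPolynomial (Fin d) k ⧸ cocircuitIdeal V |
          ∃ T : Finset S, vRk V Tᶜ = d ∧
            x = Ideal.Quotient.mk (cocircuitIdeal V) (∏ s ∈ T, ∑ j, C (V j s) * X j) } := by
  classical
  set Sp := Submodule.span k
        { x : MvPolynomial (Fin d) k ⧸ cocircuitIdeal V |
          ∃ T : Finset S, vRk V Tᶜ = d ∧
            x = Ideal.Quotient.mk (cocircuitIdeal V) (∏ s ∈ T, ∑ j, C (V j s) * X j) } with hSp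
  have htop : Submodule.span k ((fun s j => V j s) '' ((Tᶜ : Finset S) : Set S)) = ⊤ := by
    apply Submodule.eq_top_of_finrank_eq
    rw [Module.finrank_pi, Fintype.card_fin]
    exact hT
  have hmem : (Pi.single j 1 : Fin d → k) ∈
      Submodule.span k ((fun s j => V j s) '' ((Tᶜ : Finset S) : Set S)) := by
    rw [htop]; exact Submodule.mem_top
  rw [Finsupp.mem_span_image_iff_linearCombination] at hmem
  obtain ⟨l, hl, hlc⟩ := hmem
  have hXj : (X j : MvPolynomial (Fin d) k) = ∑ s ∈ l.support, l s • ∑ i, C (V i s) * X i := by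
    calc (X j : MvPolynomial (Fin d) k) = myLfL k d (Pi.single j 1) := (myLfL_single j).symm
    _ = myLfL k d (Finsupp.linearCombination k (fun s j => V j s) l) := by rw [hlc]
    _ = ∑ s ∈ l.support, l s • myLfL k d (fun j => V j s) := by
        rw [Finsupp.linearCombination_apply, Finsupp.sum, map_sum]
        simp only [map_smul]
    _ = _ := rfl
  have hrw : (X j : MvPolynomial (Fin d) k) * ∏ s ∈ T, ∑ i, C (V i s) * X i
      = ∑ s ∈ l.support, l s • ((∑ i, C (V i s) * X i) * ∏ t ∈ T, ∑ i, C (V i t) * X i) := by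
    rw [hXj, Finset.sum_mul]
    simp [smul_mul_assoc]
  rw [hrw, map_sum]
  refine Submodule.sum_mem _ fun s hs => ?_
  have hms : Ideal.Quotient.mk (cocircuitIdeal V)
      (l s • ((∑ i, C (V i s) * X i) * ∏ t ∈ T, ∑ i, C (V i t) * X i))
      = l s • Ideal.Quotient.mk (cocircuitIdeal V)
        ((∑ i, C (V i s) * X i) * ∏ t ∈ T, ∑ i, C (V i t) * X i) := by
    rw [← Ideal.Quotient.mkₐ_eq_mk k, map_smul]
  rw [hms]
  refine Submodule.smul_mem _ _ ?_
  have hsT : s ∉ T := by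
    have := (Finsupp.mem_supported k l).mp hl hs
    simpa using this
  rw [show ((∑ i, C (V i s) * X i) * ∏ t ∈ T, ∑ i, C (V i t) * X i)
      = ∏ t ∈ insert s T, ∑ i, C (V i t) * X i from (Finset.prod_insert (f := fun t => ∑ i, C (V i t) * X i) hsT).symm]
  by_cases hd : vRk V ((insert s T)ᶜ : Finset S) = d
  · exact Submodule.subset_span ⟨insert s T, hd, rfl⟩
  · have hlt : vRk V ((insert s T)ᶜ : Finset S) < d :=
      lt_of_le_of_ne (myVRk_le_d V _) hd
    rw [Ideal.Quotient.eq_zero_iff_mem.mpr (myProd_mem_cocircuitIdeal V hspan hlt)]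
    exact Submodule.zero_mem _

end myAux

/-- The cocircuit algebra `C(V)` is spanned by the products `∏_{s∈T} v_s(x)` over the
subsets `T ⊆ S` with `rk_M(S∖T) = d`. -/
theorem stmt14 {k : Type*} [Field k] {d : ℕ} (V : Matrix (Fin d) S k)
    (hspan : vRk V (univ : Finset S) = d) :
    Submodule.span k
      { x : MvPolynomial (Fin d) k ⧸ cocircuitIdeal V |
        ∃ T : Finset S, vRk V Tᶜ = d ∧
          x = Ideal.Quotient.mk (cocircuitIdeal V) (∏ s ∈ T, ∑ j, C (V j s) * X j) } = ⊤ := by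
  classical
  set Sp := Submodule.span k
      { x : MvPolynomial (Fin d) k ⧸ cocircuitIdeal V |
        ∃ T : Finset S, vRk V Tᶜ = d ∧
          x = Ideal.Quotient.mk (cocircuitIdeal V) (∏ s ∈ T, ∑ j, C (V j s) * X j) } with hSp
  rw [eq_top_iff]
  rintro x -
  obtain ⟨p, rfl⟩ := Ideal.Quotient.mk_surjective x
  induction p using MvPolynomial.induction_on with
  | C a =>
    have h1 : Ideal.Quotient.mk (cocircuitIdeal V) (1 : MvPolynomial (Fin d) k) ∈ Sp := by
      refine Submodule.subset_span ⟨(∅ : Finset S), ?_, by simp⟩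
      simpa using hspan
    have heq : Ideal.Quotient.mk (cocircuitIdeal V) (MvPolynomial.C a)
        = a • Ideal.Quotient.mk (cocircuitIdeal V) (1 : MvPolynomial (Fin d) k) := by
      rw [← Ideal.Quotient.mkₐ_eq_mk k, ← map_smul]
      congr 1
      rw [smul_eq_C_mul, mul_one]
    rw [heq]
    exact Submodule.smul_mem _ _ h1
  | add p q hp hq =>
    rw [RingHom.map_add]
    exact Submodule.add_mem _ hp hq
  | mul_X p j hp =>
    rw [RingHom.map_mul]
    refine Submodule.span_induction ?_ ?_ ?_ ?_ hp
    · rintro y ⟨T, hT, rfl⟩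
      rw [← RingHom.map_mul, mul_comm]
      exact myStep V hspan hT j
    · simp
    · intro y z _ _ hy hz
      rw [add_mul]
      exact Submodule.add_mem _ hy hz
    · intro c y _ hy
      rw [smul_mul_assoc]
      exact Submodule.smul_mem _ _ hy
end

section
/- Let A = (A_1,...,A_d) be a set system on S such that |⋃_{j∈J} A_j| ≥ |J| for all J ⊆ [d] (so M(A) has rank d). Suppose q ∈ ℕ^d is such that there exist pairwise disjoint sets T_j ⊆ A_j with |T_j| = q_j whose union T satisfies: S∖T contains a partial transversal of A of size d. Then for every J ⊆ [d], ∑_{j∈J} q_j ≤ |⋃_{j∈J} A_j| − |J|. -/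
open Finset MvPolynomial
attribute [local instance] Classical.propDecidable

variable {S : Type*} [Fintype S] [DecidableEq S]

/-- If `A` satisfies Hall's condition and `q` admits disjoint sets `T_j ⊆ A_j` with
`|T_j| = q_j` whose union leaves room for a full partial transversal of size `d`, then `q`
satisfies the parking polymatroid inequalities `∑_{j∈J} q_j ≤ |A(J)| − |J|`. -/
theorem stmt16 {d : ℕ} (A : Fin d → Finset S)
    (hHall : ∀ J : Finset (Fin d), J.card ≤ (J.biUnion A).card)
    (q : Fin d → ℕ) (Tj : Fin d → Finset S)
    (hsub : ∀ j, Tj j ⊆ A j) (hcard : ∀ j, (Tj j).card = q j)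
    (hdisj : ∀ i j, i ≠ j → Disjoint (Tj i) (Tj j))
    (hfree : ∃ P : Finset S, IsPT A P ∧ P.card = d ∧
      Disjoint P ((univ : Finset (Fin d)).biUnion Tj)) :
    ∀ J : Finset (Fin d), ∑ j ∈ J, q j + J.card ≤ (J.biUnion A).card := by
  obtain ⟨P, ⟨f, hinj, hmem⟩, hPcard, hPdisj⟩ := hfree
  intro J
  have himg : P.image f = univ := by
    apply Finset.eq_univ_of_card
    rw [Finset.card_image_of_injOn hinj, hPcard, Fintype.card_fin]
  set U := J.biUnion Tj with hU
  have hUcard : U.card = ∑ j ∈ J, q j := by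
    rw [Finset.card_biUnion (fun i _ j _ hij => hdisj i j hij)]
    exact Finset.sum_congr rfl fun j _ => hcard j
  set P' := P.filter (fun s => f s ∈ J) with hP'
  have hP'sub : P' ⊆ P := Finset.filter_subset _ _
  have hP'card : P'.card = J.card := by
    have himg' : P'.image f = J := by
      apply Finset.Subset.antisymm
      · intro j hj
        obtain ⟨s, hs, rfl⟩ := Finset.mem_image.mp hj
        exact (Finset.mem_filter.mp hs).2
      · intro j hj
        have : j ∈ P.image f := himg ▸ Finset.mem_univ j
        obtain ⟨s, hs, rfl⟩ := Finset.mem_image.mp this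
        exact Finset.mem_image.mpr ⟨s, Finset.mem_filter.mpr ⟨hs, hj⟩, rfl⟩
    rw [← himg', Finset.card_image_of_injOn (hinj.mono (by exact_mod_cast Finset.coe_subset.mpr hP'sub))]
  have hUsub : U ⊆ J.biUnion A := by
    intro x hx
    obtain ⟨j, hj, hxj⟩ := Finset.mem_biUnion.mp hx
    exact Finset.mem_biUnion.mpr ⟨j, hj, hsub j hxj⟩
  have hP'subA : P' ⊆ J.biUnion A := by
    intro s hs
    obtain ⟨hsP, hfs⟩ := Finset.mem_filter.mp hs
    exact Finset.mem_biUnion.mpr ⟨f s, hfs, hmem s hsP⟩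
  have hdisjUP : Disjoint U P' := by
    refine Finset.disjoint_left.mpr fun x hxU hxP' => ?_
    have hxP : x ∈ P := hP'sub hxP'
    have : x ∈ (univ : Finset (Fin d)).biUnion Tj := by
      obtain ⟨j, _, hxj⟩ := Finset.mem_biUnion.mp hxU
      exact Finset.mem_biUnion.mpr ⟨j, Finset.mem_univ j, hxj⟩
    exact Finset.disjoint_right.mp hPdisj this hxP
  calc ∑ j ∈ J, q j + J.card = (U ∪ P').card := by
        rw [Finset.card_union_of_disjoint hdisjUP, hUcard, hP'card]
    _ ≤ (J.biUnion A).card :=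
        Finset.card_le_card (Finset.union_subset hUsub hP'subA)
end
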